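/- Let N be a positive integer, let S be the N×N matrix over a commutative ring R (indexed by {0,1,…,N−1}) with S(i,j) = 1 if j = i + 1 and S(i,j) = 0 otherwise, and let B be a p×p matrix over R. Then for every natural number m, the ((i,a),(j,b)) entry of (S ⊗ I_p + I_N ⊗ B)^m equals C(m, j−i) · B^{m−(j−i)}(a,b) if i ≤ j ≤ i + m, and equals 0 otherwise, where C(m,k) denotes the binomial coefficient. -/
import Mathlib

open Matrix Kronecker

lemma Spow_entry {R : Type*} [CommRing R] {N : ℕ}
    (S : Matrix (Fin N) (Fin N) R)
    (hS : ∀ i j : Fin N, S i j = if (j : ℕ) = (i : ℕ) + 1 then 1 else 0) :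
    ∀ (k : ℕ) (i j : Fin N), (S ^ k) i j = if (j : ℕ) = (i : ℕ) + k then 1 else 0 := by
  intro k
  induction k with
  | zero =>
    intro i j
    simp [Matrix.one_apply, Fin.ext_iff, eq_comm]
  | succ k ih =>
    intro i j
    rw [pow_succ, Matrix.mul_apply]
    by_cases hj : (j : ℕ) = (i : ℕ) + k + 1
    · have hk : (i : ℕ) + k < N := by omega
      rw [Finset.sum_eq_single (⟨(i : ℕ) + k, hk⟩ : Fin N)]
      · rw [ih, hS, if_pos rfl, one_mul,
          if_pos (show (j:ℕ) = (((⟨(i:ℕ)+k, hk⟩ : Fin N)) : ℕ) + 1 from hj),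
          if_pos (show (j:ℕ) = (i:ℕ) + (k+1) by omega)]
      · intro l _ hl
        rw [ih]
        have : (l : ℕ) ≠ (i : ℕ) + k := by
          intro h; exact hl (Fin.ext h)
        simp [this]
      · intro h; exact absurd (Finset.mem_univ _) h
    · rw [if_neg (by omega)]
      apply Finset.sum_eq_zero
      intro l _
      rw [ih, hS]
      by_cases hl : (l : ℕ) = (i : ℕ) + k
      · have : (j : ℕ) ≠ (l : ℕ) + 1 := by omega
        simp [this]
      · simp [hl]

theorem path_kronecker_pow_entry (R : Type*) [CommRing R] (N p : ℕ) (hN : 0 < N)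
    (S : Matrix (Fin N) (Fin N) R)
    (hS : ∀ i j : Fin N, S i j = if (j : ℕ) = (i : ℕ) + 1 then 1 else 0)
    (B : Matrix (Fin p) (Fin p) R) (m : ℕ) (i j : Fin N) (a b : Fin p) :
    ((S ⊗ₖ (1 : Matrix (Fin p) (Fin p) R) + (1 : Matrix (Fin N) (Fin N) R) ⊗ₖ B) ^ m)
        (i, a) (j, b) =
      if (i : ℕ) ≤ (j : ℕ) ∧ (j : ℕ) ≤ (i : ℕ) + m then
        (m.choose ((j : ℕ) - (i : ℕ)) : R) * (B ^ (m - ((j : ℕ) - (i : ℕ)))) a b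
      else 0 := by
  have hcomm : Commute (S ⊗ₖ (1 : Matrix (Fin p) (Fin p) R))
      ((1 : Matrix (Fin N) (Fin N) R) ⊗ₖ B) := by
    unfold Commute SemiconjBy
    rw [← Matrix.mul_kronecker_mul, ← Matrix.mul_kronecker_mul, one_mul, mul_one,
      one_mul, mul_one]
  have hx : ∀ k : ℕ, (S ⊗ₖ (1 : Matrix (Fin p) (Fin p) R)) ^ k = (S ^ k) ⊗ₖ (1 : Matrix (Fin p) (Fin p) R) := by
    intro k
    induction k with
    | zero => simp [Matrix.one_kronecker_one]
    | succ k ih => rw [pow_succ, pow_succ, ih, ← Matrix.mul_kronecker_mul, one_mul]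
  have hy : ∀ k : ℕ, ((1 : Matrix (Fin N) (Fin N) R) ⊗ₖ B) ^ k = (1 : Matrix (Fin N) (Fin N) R) ⊗ₖ (B ^ k) := by
    intro k
    induction k with
    | zero => simp [Matrix.one_kronecker_one]
    | succ k ih => rw [pow_succ, pow_succ, ih, ← Matrix.mul_kronecker_mul, one_mul]
  rw [hcomm.add_pow]
  have hterm : ∀ k : ℕ,
      ((S ⊗ₖ (1 : Matrix (Fin p) (Fin p) R)) ^ k *
        ((1 : Matrix (Fin N) (Fin N) R) ⊗ₖ B) ^ (m - k) * (m.choose k : Matrix (Fin N × Fin p) (Fin N × Fin p) R))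
        (i, a) (j, b) =
      (m.choose k : R) * ((if (j : ℕ) = (i : ℕ) + k then (1:R) else 0) * (B ^ (m - k)) a b) := by
    intro k
    rw [hx, hy, ← Matrix.mul_kronecker_mul, mul_one, one_mul]
    have : ((S ^ k) ⊗ₖ (B ^ (m - k)) * (m.choose k : Matrix (Fin N × Fin p) (Fin N × Fin p) R)) =
        (m.choose k) • ((S ^ k) ⊗ₖ (B ^ (m - k))) := by
      rw [nsmul_eq_mul, (Nat.cast_commute (m.choose k) _).eq]
    rw [this, Matrix.smul_apply, Matrix.kroneckerMap_apply, nsmul_eq_mul,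
      Spow_entry S hS]
  rw [Matrix.sum_apply]
  simp only [hterm]
  by_cases hij : (i : ℕ) ≤ (j : ℕ) ∧ (j : ℕ) ≤ (i : ℕ) + m
  · rw [if_pos hij]
    rw [Finset.sum_eq_single ((j : ℕ) - (i : ℕ))]
    · rw [if_pos (by omega), one_mul]
    · intro k _ hk
      rw [if_neg (by omega)]
      ring
    · intro h
      exact absurd (Finset.mem_range.mpr (by omega)) h
  · rw [if_neg hij]
    apply Finset.sum_eq_zero
    intro k hk
    rw [Finset.mem_range] at hk
    rw [if_neg (by omega)]
    ring
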